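/- Let v¹, v² ∈ ℝ with v¹ > 0 and v¹ ≠ e^{v²}. Let F(v¹, v²) = ½(v¹)²v² + v¹e^{v²} + ½(v¹)²log v¹, let η = [[0,1],[1,0]] with inverse η^{αβ} (so η^{12} = η^{21} = 1, η^{11} = η^{22} = 0), and define the structure constants c_{αβ}^γ = Σ_ξ η^{γξ} ∂³F/(∂v^ξ∂v^α∂v^β). Then the vector field e with components e¹ = v¹/(v¹ − e^{v²}), e² = −1/(v¹ − e^{v²}) is the unity of the induced multiplication: Σ_γ e^γ c_{γα}^β = δ_α^β for all α, β ∈ {1,2}. -/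

import Mathlib

/-- The potential of the generalized Frobenius manifold associated with the
dispersionless Ablowitz–Ladik hierarchy:
`F = ½(v¹)²v² + v¹e^{v²} + ½(v¹)² log v¹`. -/
noncomputable def Fpot (v : Fin 2 → ℝ) : ℝ :=
  (v 0) ^ 2 * v 1 / 2 + v 0 * Real.exp (v 1) + (v 0) ^ 2 * Real.log (v 0) / 2

/-- The partial derivative of a function `(Fin 2 → ℝ) → ℝ` in the `i`-th coordinate
direction. -/
noncomputable def pd (i : Fin 2) (f : (Fin 2 → ℝ) → ℝ) : (Fin 2 → ℝ) → ℝ :=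
  fun v => deriv (fun t => f (Function.update v i t)) (v i)

/-- The inverse flat metric `η^{αβ}`, with `η^{12} = η^{21} = 1`, `η^{11} = η^{22} = 0`. -/
def etaInv : Fin 2 → Fin 2 → ℝ := ![![0, 1], ![1, 0]]

/-- The unity vector field `e¹ = v¹/(v¹ − e^{v²})`, `e² = −1/(v¹ − e^{v²})`. -/
noncomputable def unityVF (v : Fin 2 → ℝ) : Fin 2 → ℝ :=
  ![v 0 / (v 0 - Real.exp (v 1)), -1 / (v 0 - Real.exp (v 1))]

/-! The third derivatives of `F` are computed one coordinate line at a time. Because of the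
`log v¹` term the intermediate formulas hold only on the half-plane `v¹ > 0`, which suffices since
a partial derivative at a point only sees the function near that point. With
`F₁₁₁ = 1/v¹, F₁₁₂ = 1, F₁₂₂ = e^{v²}, F₂₂₂ = v¹e^{v²}` in hand, the unity property amounts to
`e^γ F_{γαξ} = η_{αξ}`, a rational identity in `v¹` and `e^{v²}` once `v¹ ≠ e^{v²}`. -/

open Real

theorem pd_congr_of_eqOn {f g : (Fin 2 → ℝ) → ℝ} {s : Set (Fin 2 → ℝ)} (hs : IsOpen s)
    (hfg : Set.EqOn f g s) {v : Fin 2 → ℝ} (hv : v ∈ s) (i : Fin 2) :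
    pd i f v = pd i g v := by
  have hline : Continuous fun t => Function.update v i t :=
    continuous_const.update i continuous_id
  refine Filter.EventuallyEq.deriv_eq ?_
  filter_upwards [hline.continuousAt.preimage_mem_nhds (by simpa using hs.mem_nhds hv)]
    with t ht using hfg ht

theorem pd_congr_of_pos {f g : (Fin 2 → ℝ) → ℝ} (hfg : ∀ w : Fin 2 → ℝ, 0 < w 0 → f w = g w)
    {v : Fin 2 → ℝ} (hv : 0 < v 0) (i : Fin 2) : pd i f v = pd i g v :=
  pd_congr_of_eqOn (isOpen_lt continuous_const (continuous_apply 0)) hfg hv i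

theorem pd_zero_apply (f : (Fin 2 → ℝ) → ℝ) (v : Fin 2 → ℝ) :
    pd 0 f v = deriv (fun t => f ![t, v 1]) (v 0) := by
  have hline (t : ℝ) : Function.update v 0 t = ![t, v 1] := by
    ext i; fin_cases i <;> simp
  simp only [pd, hline]

theorem pd_one_apply (f : (Fin 2 → ℝ) → ℝ) (v : Fin 2 → ℝ) :
    pd 1 f v = deriv (fun t => f ![v 0, t]) (v 1) := by
  have hline (t : ℝ) : Function.update v 1 t = ![v 0, t] := by
    ext i; fin_cases i <;> simp
  simp only [pd, hline]

section

variable {v : Fin 2 → ℝ}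

theorem pd_zero_Fpot (hv : 0 < v 0) :
    pd 0 Fpot v = v 0 * v 1 + exp (v 1) + v 0 * log (v 0) + v 0 / 2 := by
  have : v 0 ≠ 0 := hv.ne'
  simp (disch := fun_prop (disch := assumption)) [pd_zero_apply, Fpot]
  field_simp
  ring

theorem pd_one_Fpot : pd 1 Fpot v = v 0 ^ 2 / 2 + v 0 * exp (v 1) := by
  simp (disch := fun_prop) [pd_one_apply, Fpot]

theorem pd_zero_pd_zero_Fpot (hv : 0 < v 0) : pd 0 (pd 0 Fpot) v = v 1 + log (v 0) + 3 / 2 := by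
  rw [pd_congr_of_pos (fun w hw => pd_zero_Fpot hw) hv]
  have : v 0 ≠ 0 := hv.ne'
  simp (disch := fun_prop (disch := assumption)) [pd_zero_apply]
  field_simp
  ring

theorem pd_one_pd_zero_Fpot (hv : 0 < v 0) : pd 1 (pd 0 Fpot) v = v 0 + exp (v 1) := by
  rw [pd_congr_of_pos (fun w hw => pd_zero_Fpot hw) hv]
  simp (disch := fun_prop) [pd_one_apply]

theorem pd_zero_pd_one_Fpot : pd 0 (pd 1 Fpot) v = v 0 + exp (v 1) := by
  simp (disch := fun_prop) [funext fun w => pd_one_Fpot (v := w), pd_zero_apply]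
  ring

theorem pd_one_pd_one_Fpot : pd 1 (pd 1 Fpot) v = v 0 * exp (v 1) := by
  simp (disch := fun_prop) [funext fun w => pd_one_Fpot (v := w), pd_one_apply]

theorem pd_pd_zero_pd_zero_Fpot (hv : 0 < v 0) (ξ : Fin 2) :
    pd ξ (pd 0 (pd 0 Fpot)) v = ![(v 0)⁻¹, 1] ξ := by
  rw [pd_congr_of_pos (fun w hw => pd_zero_pd_zero_Fpot hw) hv]
  have : v 0 ≠ 0 := hv.ne'
  fin_cases ξ <;> simp (disch := fun_prop (disch := assumption)) [pd_zero_apply, pd_one_apply]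

theorem pd_pd_one_pd_zero_Fpot (hv : 0 < v 0) (ξ : Fin 2) :
    pd ξ (pd 1 (pd 0 Fpot)) v = ![1, exp (v 1)] ξ := by
  rw [pd_congr_of_pos (fun w hw => pd_one_pd_zero_Fpot hw) hv]
  fin_cases ξ <;> simp (disch := fun_prop) [pd_zero_apply, pd_one_apply]

theorem pd_pd_zero_pd_one_Fpot (ξ : Fin 2) :
    pd ξ (pd 0 (pd 1 Fpot)) v = ![1, exp (v 1)] ξ := by
  rw [funext fun w => pd_zero_pd_one_Fpot (v := w)]
  fin_cases ξ <;> simp (disch := fun_prop) [pd_zero_apply, pd_one_apply]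

theorem pd_pd_one_pd_one_Fpot (ξ : Fin 2) :
    pd ξ (pd 1 (pd 1 Fpot)) v = ![exp (v 1), v 0 * exp (v 1)] ξ := by
  rw [funext fun w => pd_one_pd_one_Fpot (v := w)]
  fin_cases ξ <;> simp (disch := fun_prop) [pd_zero_apply, pd_one_apply]

end

/-- The vector field `e` with components `e¹ = v¹/(v¹ − e^{v²})`,
`e² = −1/(v¹ − e^{v²})` is the unity of the multiplication with structure constants
`c_{αβ}^γ = Σ_ξ η^{γξ} ∂³F/(∂v^ξ∂v^α∂v^β)`: one has `Σ_γ e^γ c_{γα}^β = δ_α^β`. -/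
theorem unity_of_frobenius_multiplication
    (v : Fin 2 → ℝ) (hv : v 0 > 0) (hne : v 0 ≠ Real.exp (v 1)) :
    ∀ α β : Fin 2,
      (∑ γ : Fin 2, unityVF v γ * ∑ ξ : Fin 2, etaInv β ξ * pd ξ (pd γ (pd α Fpot)) v) =
        if α = β then 1 else 0 := by
  intro α β
  have hD : v 0 - exp (v 1) ≠ 0 := sub_ne_zero.mpr hne
  fin_cases α <;> fin_cases β <;>
    simp [Fin.sum_univ_two, unityVF, etaInv, pd_pd_zero_pd_zero_Fpot hv, pd_pd_one_pd_zero_Fpot hv,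
      pd_pd_zero_pd_one_Fpot, pd_pd_one_pd_one_Fpot] <;>
    field_simp <;> ring
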